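/- arXiv:2309.01758 — 2 statements merged into one kernel-verified Lean document; each statement's English description precedes it below -/
import Mathlib

section
/- Under the hypotheses of the construction of Δ_r (unitary BiHom-algebra with α, β bijective, ψ, ω satisfying the usual commutation and multiplicativity conditions, r invariant), if r is a solution of the λ-associative BiHom-Yang-Baxter equation r₁₃r₁₂ − r₁₂r₂₃ + r₂₃r₁₃ = λr₁₃, then Δ_r defined by Δ_r(a) = ωα⁻¹(a)r¹⊗β(r²) − α(r¹)⊗r²ψβ⁻¹(a) − λ(ω(a)⊗1) is BiHom-coassociative: (Δ_r⊗ψ)Δ_r = (ω⊗Δ_r)Δ_r. Consequently (A, μ, Δ_r, 1, α, β, ψ, ω) is a unitary λ-infBH-bialgebra. -/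
open TensorProduct

noncomputable section

variable (K : Type*) [Field K] (A : Type*) [AddCommGroup A] [Module K A]
variable (M : Type*) [AddCommGroup M] [Module K M]

/-- BiHom-associative algebra axioms for `(A, μ, α, β)`. -/
def BiHomAssoc (μ : A ⊗[K] A →ₗ[K] A) (α β : A →ₗ[K] A) : Prop :=
  α ∘ₗ β = β ∘ₗ α ∧
  (∀ a b : A, α (μ (a ⊗ₜ[K] b)) = μ (α a ⊗ₜ[K] α b)) ∧
  (∀ a b : A, β (μ (a ⊗ₜ[K] b)) = μ (β a ⊗ₜ[K] β b)) ∧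
  (∀ a b c : A, μ (α a ⊗ₜ[K] μ (b ⊗ₜ[K] c)) = μ (μ (a ⊗ₜ[K] b) ⊗ₜ[K] β c))

/-- BiHom-coassociative coalgebra axioms for `(A, Δ, ψ, ω)`. -/
def BiHomCoassoc (Δ : A →ₗ[K] A ⊗[K] A) (ψ ω : A →ₗ[K] A) : Prop :=
  ψ ∘ₗ ω = ω ∘ₗ ψ ∧
  (TensorProduct.map ψ ψ ∘ₗ Δ = Δ ∘ₗ ψ) ∧
  (TensorProduct.map ω ω ∘ₗ Δ = Δ ∘ₗ ω) ∧
  ((TensorProduct.assoc K A A A).toLinearMap ∘ₗ TensorProduct.map Δ ψ ∘ₗ Δ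
    = TensorProduct.map ω Δ ∘ₗ Δ)

/-- The compatibility condition of a `λ`-infinitesimal BiHom-bialgebra:
`Δ(ab) = ω(a)b₁ ⊗ β(b₂) + α(a₁) ⊗ a₂ψ(b) + λ (αω(a) ⊗ βψ(b))`. -/
def InfBHCompat (lam : K) (μ : A ⊗[K] A →ₗ[K] A) (Δ : A →ₗ[K] A ⊗[K] A)
    (α β ψ ω : A →ₗ[K] A) : Prop :=
  ∀ a b : A, Δ (μ (a ⊗ₜ[K] b)) =
    TensorProduct.map μ β ((TensorProduct.assoc K A A A).symm (ω a ⊗ₜ[K] Δ b))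
    + TensorProduct.map α μ ((TensorProduct.assoc K A A A) (Δ a ⊗ₜ[K] ψ b))
    + lam • (α (ω a) ⊗ₜ[K] β (ψ b))

/-- `λ`-infinitesimal BiHom-bialgebra. -/
def IsInfBH (lam : K) (μ : A ⊗[K] A →ₗ[K] A) (Δ : A →ₗ[K] A ⊗[K] A)
    (α β ψ ω : A →ₗ[K] A) : Prop :=
  BiHomAssoc K A μ α β ∧ BiHomCoassoc K A Δ ψ ω ∧
  α ∘ₗ ψ = ψ ∘ₗ α ∧ α ∘ₗ ω = ω ∘ₗ α ∧ β ∘ₗ ψ = ψ ∘ₗ β ∧ β ∘ₗ ω = ω ∘ₗ β ∧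
  (TensorProduct.map α α ∘ₗ Δ = Δ ∘ₗ α) ∧
  (TensorProduct.map β β ∘ₗ Δ = Δ ∘ₗ β) ∧
  (ψ ∘ₗ μ = μ ∘ₗ TensorProduct.map ψ ψ) ∧
  (ω ∘ₗ μ = μ ∘ₗ TensorProduct.map ω ω) ∧
  InfBHCompat K A lam μ Δ α β ψ ω

/-- Unit axioms for a unitary `λ`-infBH-bialgebra (or unitary BiHom-algebra). -/
def IsUnitBH (μ : A ⊗[K] A →ₗ[K] A) (α β ψ ω : A →ₗ[K] A) (e : A) : Prop :=
  α e = e ∧ β e = e ∧ ψ e = e ∧ ω e = e ∧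
  (∀ a : A, μ (a ⊗ₜ[K] e) = α a) ∧ (∀ a : A, μ (e ⊗ₜ[K] a) = β a)

/-- Counit axioms for a counitary `λ`-infBH-bialgebra. -/
def IsCounitBH (Δ : A →ₗ[K] A ⊗[K] A) (α β ψ ω : A →ₗ[K] A) (ε : A →ₗ[K] K) : Prop :=
  ε ∘ₗ α = ε ∧ ε ∘ₗ β = ε ∧ ε ∘ₗ ψ = ε ∧ ε ∘ₗ ω = ε ∧
  ((TensorProduct.rid K A).toLinearMap ∘ₗ TensorProduct.map LinearMap.id ε ∘ₗ Δ = ω) ∧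
  ((TensorProduct.lid K A).toLinearMap ∘ₗ TensorProduct.map ε LinearMap.id ∘ₗ Δ = ψ)

/-- Left BiHom-module axioms. -/
def IsLeftBiHomModule (μ : A ⊗[K] A →ₗ[K] A) (α β : A →ₗ[K] A)
    (γ : A ⊗[K] M →ₗ[K] M) (αM βM : M →ₗ[K] M) : Prop :=
  αM ∘ₗ βM = βM ∘ₗ αM ∧
  (∀ (a : A) (m : M), αM (γ (a ⊗ₜ[K] m)) = γ (α a ⊗ₜ[K] αM m)) ∧
  (∀ (a : A) (m : M), βM (γ (a ⊗ₜ[K] m)) = γ (β a ⊗ₜ[K] βM m)) ∧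
  (∀ (a a' : A) (m : M),
    γ (α a ⊗ₜ[K] γ (a' ⊗ₜ[K] m)) = γ (μ (a ⊗ₜ[K] a') ⊗ₜ[K] βM m))

/-- Left BiHom-comodule axioms. -/
def IsLeftBiHomComodule (Δ : A →ₗ[K] A ⊗[K] A) (ψ ω : A →ₗ[K] A)
    (ρ : M →ₗ[K] A ⊗[K] M) (ψM ωM : M →ₗ[K] M) : Prop :=
  ψM ∘ₗ ωM = ωM ∘ₗ ψM ∧
  (TensorProduct.map ψ ψM ∘ₗ ρ = ρ ∘ₗ ψM) ∧
  (TensorProduct.map ω ωM ∘ₗ ρ = ρ ∘ₗ ωM) ∧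
  ((TensorProduct.assoc K A A M).toLinearMap ∘ₗ TensorProduct.map Δ ψM ∘ₗ ρ
    = TensorProduct.map ω ρ ∘ₗ ρ)

/-- Left `λ`-infBH-Hopf module over a `λ`-infBH-bialgebra. -/
def IsInfBHHopfModule (lam : K) (μ : A ⊗[K] A →ₗ[K] A) (Δ : A →ₗ[K] A ⊗[K] A)
    (α β ψ ω : A →ₗ[K] A) (γ : A ⊗[K] M →ₗ[K] M) (ρ : M →ₗ[K] A ⊗[K] M)
    (αM βM ψM ωM : M →ₗ[K] M) : Prop :=
  IsLeftBiHomModule K A M μ α β γ αM βM ∧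
  IsLeftBiHomComodule K A M Δ ψ ω ρ ψM ωM ∧
  αM ∘ₗ ψM = ψM ∘ₗ αM ∧ αM ∘ₗ ωM = ωM ∘ₗ αM ∧
  βM ∘ₗ ψM = ψM ∘ₗ βM ∧ βM ∘ₗ ωM = ωM ∘ₗ βM ∧
  ∀ (a : A) (m : M), ρ (γ (a ⊗ₜ[K] m)) =
    TensorProduct.map μ βM ((TensorProduct.assoc K A A M).symm (ω a ⊗ₜ[K] ρ m))
    + TensorProduct.map α γ ((TensorProduct.assoc K A A M) (Δ a ⊗ₜ[K] ψM m))
    + lam • (α (ω a) ⊗ₜ[K] βM (ψM m))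

section RDefs

variable (K : Type*) [Field K] (A : Type*) [AddCommGroup A] [Module K A]

/-- `Δ_r(a) = ωα⁻¹(a)r¹ ⊗ β(r²) − α(r¹) ⊗ r²ψβ⁻¹(a) − λ (ω(a) ⊗ 1)`. -/
def DeltaR (lam : K) (μ : A ⊗[K] A →ₗ[K] A) (α β : A ≃ₗ[K] A) (ψ ω : A →ₗ[K] A)
    (e : A) (r : A ⊗[K] A) : A →ₗ[K] A ⊗[K] A :=
  (TensorProduct.map μ β.toLinearMap ∘ₗ (TensorProduct.assoc K A A A).symm.toLinearMap
      ∘ₗ ((TensorProduct.mk K A (A ⊗[K] A)).flip r) ∘ₗ ω ∘ₗ α.symm.toLinearMap)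
  - (TensorProduct.map α.toLinearMap μ ∘ₗ (TensorProduct.assoc K A A A).toLinearMap
      ∘ₗ (TensorProduct.mk K (A ⊗[K] A) A r) ∘ₗ ψ ∘ₗ β.symm.toLinearMap)
  - lam • (((TensorProduct.mk K A A).flip e) ∘ₗ ω)

/-- `r₁₂r₂₃ = α(r¹) ⊗ r²r̄¹ ⊗ β(r̄²)` (with `r̄ = r`). -/
def R12R23 (μ : A ⊗[K] A →ₗ[K] A) (α β : A →ₗ[K] A) (r : A ⊗[K] A) :
    A ⊗[K] (A ⊗[K] A) :=
  (TensorProduct.map α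
      (TensorProduct.map μ β ∘ₗ (TensorProduct.assoc K A A A).symm.toLinearMap)
    ∘ₗ (TensorProduct.assoc K A A (A ⊗[K] A)).toLinearMap) (r ⊗ₜ[K] r)

/-- `r₁₃r₁₂ = ω(r¹)r̄¹ ⊗ β(r̄²) ⊗ αψ(r²)` (with `r̄ = r`). -/
def R13R12 (μ : A ⊗[K] A →ₗ[K] A) (α β ψ ω : A →ₗ[K] A) (r : A ⊗[K] A) :
    A ⊗[K] (A ⊗[K] A) :=
  (TensorProduct.map (μ ∘ₗ TensorProduct.map ω LinearMap.id)
      ((TensorProduct.comm K A A).toLinearMap ∘ₗ TensorProduct.map (α ∘ₗ ψ) β)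
    ∘ₗ (TensorProduct.tensorTensorTensorComm K A A A A).toLinearMap) (r ⊗ₜ[K] r)

/-- `r₂₃r₁₃ = βω(r¹) ⊗ α(r̄¹) ⊗ r̄²ψ(r²)` (with `r̄ = r`). -/
def R23R13 (μ : A ⊗[K] A →ₗ[K] A) (α β ψ ω : A →ₗ[K] A) (r : A ⊗[K] A) :
    A ⊗[K] (A ⊗[K] A) :=
  ((TensorProduct.assoc K A A A).toLinearMap
    ∘ₗ TensorProduct.map (TensorProduct.map (β ∘ₗ ω) α)
      (μ ∘ₗ TensorProduct.map LinearMap.id ψ ∘ₗ (TensorProduct.comm K A A).toLinearMap)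
    ∘ₗ (TensorProduct.tensorTensorTensorComm K A A A A).toLinearMap) (r ⊗ₜ[K] r)

/-- `r₁₃ = ω(r¹) ⊗ 1 ⊗ ψ(r²)`. -/
def R13E (ψ ω : A →ₗ[K] A) (e : A) (r : A ⊗[K] A) : A ⊗[K] (A ⊗[K] A) :=
  TensorProduct.map ω ((TensorProduct.mk K A A e) ∘ₗ ψ) r

/-- `r₁₂ = r ⊗ 1`. -/
def R12E (e : A) (r : A ⊗[K] A) : A ⊗[K] (A ⊗[K] A) :=
  TensorProduct.map LinearMap.id ((TensorProduct.mk K A A).flip e) r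

/-- `r₂₃ = 1 ⊗ r`. -/
def R23E (e : A) (r : A ⊗[K] A) : A ⊗[K] (A ⊗[K] A) := e ⊗ₜ[K] r

end RDefs


namespace YBAux
noncomputable section
open TensorProduct
variable {K : Type*} [Field K] {A : Type*} [AddCommGroup A] [Module K A]
variable {P : Type*} [AddCommGroup P] [Module K P]

lemma ext22 (F G : (A ⊗[K] A) ⊗[K] (A ⊗[K] A) →ₗ[K] P)
    (h : ∀ x y z w : A, F ((x ⊗ₜ y) ⊗ₜ (z ⊗ₜ w)) = G ((x ⊗ₜ y) ⊗ₜ (z ⊗ₜ w))) : F = G := by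
  refine TensorProduct.ext' fun u v => ?_
  induction u using TensorProduct.induction_on with
  | zero => simp
  | tmul x y =>
    induction v using TensorProduct.induction_on with
    | zero => simp
    | tmul z w => exact h x y z w
    | add v₁ v₂ ih₁ ih₂ => simp only [tmul_add, map_add, ih₁, ih₂]
  | add u₁ u₂ ih₁ ih₂ => simp only [add_tmul, map_add, ih₁, ih₂]

variable (r : A ⊗[K] A)

lemma subst1 {g₁ g₂ h₁ h₂ : A →ₗ[K] A} (hg : map g₁ g₂ r = r) (hh : map h₁ h₂ r = r)
    (F G : A ⊗[K] A →ₗ[K] P)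
    (h : ∀ x y, F (g₁ x ⊗ₜ g₂ y) = G (h₁ x ⊗ₜ h₂ y)) : F r = G r := by
  have e : F ∘ₗ map g₁ g₂ = G ∘ₗ map h₁ h₂ :=
    TensorProduct.ext' fun x y => by simpa using h x y
  calc F r = (F ∘ₗ map g₁ g₂) r := by rw [LinearMap.comp_apply, hg]
    _ = (G ∘ₗ map h₁ h₂) r := by rw [e]
    _ = G r := by rw [LinearMap.comp_apply, hh]

lemma subst2 {g₁ g₂ h₁ h₂ k₁ k₂ l₁ l₂ : A →ₗ[K] A}
    (hg : map g₁ g₂ r = r) (hh : map h₁ h₂ r = r) (hk : map k₁ k₂ r = r) (hl : map l₁ l₂ r = r)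
    (F G : (A ⊗[K] A) ⊗[K] (A ⊗[K] A) →ₗ[K] P)
    (h : ∀ x y z w, F ((g₁ x ⊗ₜ g₂ y) ⊗ₜ (h₁ z ⊗ₜ h₂ w)) = G ((k₁ x ⊗ₜ k₂ y) ⊗ₜ (l₁ z ⊗ₜ l₂ w))) :
    F (r ⊗ₜ r) = G (r ⊗ₜ r) := by
  have e : F ∘ₗ map (map g₁ g₂) (map h₁ h₂) = G ∘ₗ map (map k₁ k₂) (map l₁ l₂) :=
    ext22 _ _ fun x y z w => by simpa using h x y z w
  calc F (r ⊗ₜ r) = (F ∘ₗ map (map g₁ g₂) (map h₁ h₂)) (r ⊗ₜ r) := by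
        rw [LinearMap.comp_apply, map_tmul, hg, hh]
    _ = (G ∘ₗ map (map k₁ k₂) (map l₁ l₂)) (r ⊗ₜ r) := by rw [e]
    _ = G (r ⊗ₜ r) := by rw [LinearMap.comp_apply, map_tmul, hk, hl]

lemma subst2_swap {g₁ g₂ h₁ h₂ k₁ k₂ l₁ l₂ : A →ₗ[K] A}
    (hg : map g₁ g₂ r = r) (hh : map h₁ h₂ r = r) (hk : map k₁ k₂ r = r) (hl : map l₁ l₂ r = r)
    (F G : (A ⊗[K] A) ⊗[K] (A ⊗[K] A) →ₗ[K] P)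
    (h : ∀ x y z w, F ((g₁ x ⊗ₜ g₂ y) ⊗ₜ (h₁ z ⊗ₜ h₂ w)) = G ((k₁ z ⊗ₜ k₂ w) ⊗ₜ (l₁ x ⊗ₜ l₂ y))) :
    F (r ⊗ₜ r) = G (r ⊗ₜ r) := by
  have e : F ∘ₗ map (map g₁ g₂) (map h₁ h₂)
      = (G ∘ₗ map (map k₁ k₂) (map l₁ l₂)) ∘ₗ (TensorProduct.comm K (A ⊗[K] A) (A ⊗[K] A)).toLinearMap :=
    ext22 _ _ fun x y z w => by simpa using h x y z w
  calc F (r ⊗ₜ r) = (F ∘ₗ map (map g₁ g₂) (map h₁ h₂)) (r ⊗ₜ r) := by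
        rw [LinearMap.comp_apply, map_tmul, hg, hh]
    _ = (G ∘ₗ map (map k₁ k₂) (map l₁ l₂)) (r ⊗ₜ r) := by rw [e]; simp [comm_tmul]
    _ = G (r ⊗ₜ r) := by rw [LinearMap.comp_apply, map_tmul, hk, hl]

variable (μ : A ⊗[K] A →ₗ[K] A) (α β : A ≃ₗ[K] A) (ψ ω : A →ₗ[K] A) (e : A)

def lm (c : A) : A →ₗ[K] A := TensorProduct.curry μ c
def rm (c : A) : A →ₗ[K] A := (TensorProduct.curry μ).flip c

@[simp] lemma lm_apply (c x : A) : lm μ c x = μ (c ⊗ₜ x) := rfl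
@[simp] lemma rm_apply (c x : A) : rm μ c x = μ (x ⊗ₜ c) := rfl

def C1 : A →ₗ[K] A ⊗[K] A :=
  TensorProduct.map μ β.toLinearMap ∘ₗ (TensorProduct.assoc K A A A).symm.toLinearMap
      ∘ₗ ((TensorProduct.mk K A (A ⊗[K] A)).flip r) ∘ₗ ω ∘ₗ α.symm.toLinearMap

def C2 : A →ₗ[K] A ⊗[K] A :=
  TensorProduct.map α.toLinearMap μ ∘ₗ (TensorProduct.assoc K A A A).toLinearMap
      ∘ₗ (TensorProduct.mk K (A ⊗[K] A) A r) ∘ₗ ψ ∘ₗ β.symm.toLinearMap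

def C3 : A →ₗ[K] A ⊗[K] A := ((TensorProduct.mk K A A).flip e) ∘ₗ ω

lemma aux1 (c : A) : ∀ t : A ⊗[K] A,
    map μ β.toLinearMap ((TensorProduct.assoc K A A A).symm (c ⊗ₜ t))
      = map (lm μ c) β.toLinearMap t := by
  intro t
  induction t using TensorProduct.induction_on with
  | zero => simp
  | tmul z w => simp
  | add u v hu hv => simp only [tmul_add, map_add, hu, hv]

lemma aux2 (c : A) : ∀ t : A ⊗[K] A,
    map α.toLinearMap μ ((TensorProduct.assoc K A A A) (t ⊗ₜ c))
      = map α.toLinearMap (rm μ c) t := by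
  intro t
  induction t using TensorProduct.induction_on with
  | zero => simp
  | tmul z w => simp
  | add u v hu hv => simp only [add_tmul, map_add, hu, hv]

lemma C1_apply (u : A) : C1 r μ α β ω u = map (lm μ (ω (α.symm u))) β.toLinearMap r := by
  simp only [C1, LinearMap.comp_apply, LinearEquiv.coe_coe, LinearMap.flip_apply, mk_apply]
  exact aux1 μ β _ r

lemma C2_apply (u : A) : C2 r μ α β ψ u = map α.toLinearMap (rm μ (ψ (β.symm u))) r := by
  simp only [C2, LinearMap.comp_apply, LinearEquiv.coe_coe, mk_apply]
  exact aux2 μ α _ r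

@[simp] lemma C3_apply (u : A) : C3 ω e u = ω u ⊗ₜ e := rfl

lemma auxA (f g : A →ₗ[K] A) (z : A) : ∀ t : A ⊗[K] A,
    (TensorProduct.assoc K A A A) ((map f g t) ⊗ₜ z)
      = map f (((TensorProduct.mk K A A).flip z) ∘ₗ g) t := by
  intro t
  induction t using TensorProduct.induction_on with
  | zero => simp
  | tmul u v => simp
  | add u v hu hv => simp only [map_add, add_tmul, hu, hv]

def PA (b : A →ₗ[K] A →ₗ[K] A) (h k : A →ₗ[K] A) :
    (A ⊗[K] A) ⊗[K] (A ⊗[K] A) →ₗ[K] A ⊗[K] (A ⊗[K] A) :=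
  (map (lift b) ((TensorProduct.comm K A A).toLinearMap ∘ₗ map k h))
    ∘ₗ (tensorTensorTensorComm K A A A A).toLinearMap

@[simp] lemma PA_tmul (b : A →ₗ[K] A →ₗ[K] A) (h k : A →ₗ[K] A) (x y z w : A) :
    PA b h k ((x ⊗ₜ y) ⊗ₜ (z ⊗ₜ w)) = b x z ⊗ₜ (h w ⊗ₜ k y) := by
  simp [PA]

def PB (f : A →ₗ[K] A) (b : A →ₗ[K] A →ₗ[K] A) (k : A →ₗ[K] A) :
    (A ⊗[K] A) ⊗[K] (A ⊗[K] A) →ₗ[K] A ⊗[K] (A ⊗[K] A) :=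
  (map f (map (lift b) k ∘ₗ (TensorProduct.assoc K A A A).symm.toLinearMap))
    ∘ₗ (TensorProduct.assoc K A A (A ⊗[K] A)).toLinearMap

@[simp] lemma PB_tmul (f : A →ₗ[K] A) (b : A →ₗ[K] A →ₗ[K] A) (k : A →ₗ[K] A) (x y z w : A) :
    PB f b k ((x ⊗ₜ y) ⊗ₜ (z ⊗ₜ w)) = f x ⊗ₜ (b y z ⊗ₜ k w) := by
  simp [PB]

def PD (f : A →ₗ[K] A) (b : A →ₗ[K] A →ₗ[K] A) (k : A →ₗ[K] A) :
    (A ⊗[K] A) ⊗[K] (A ⊗[K] A) →ₗ[K] A ⊗[K] (A ⊗[K] A) :=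
  PB f b k ∘ₗ (TensorProduct.comm K (A ⊗[K] A) (A ⊗[K] A)).toLinearMap

@[simp] lemma PD_tmul (f : A →ₗ[K] A) (b : A →ₗ[K] A →ₗ[K] A) (k : A →ₗ[K] A) (x y z w : A) :
    PD f b k ((x ⊗ₜ y) ⊗ₜ (z ⊗ₜ w)) = f z ⊗ₜ (b w x ⊗ₜ k y) := by
  simp [PD, PB]

def PC (f g : A →ₗ[K] A) (b : A →ₗ[K] A →ₗ[K] A) :
    (A ⊗[K] A) ⊗[K] (A ⊗[K] A) →ₗ[K] A ⊗[K] (A ⊗[K] A) :=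
  (TensorProduct.assoc K A A A).toLinearMap
    ∘ₗ (map (map f g) (lift b ∘ₗ (TensorProduct.comm K A A).toLinearMap))
    ∘ₗ (tensorTensorTensorComm K A A A A).toLinearMap

@[simp] lemma PC_tmul (f g : A →ₗ[K] A) (b : A →ₗ[K] A →ₗ[K] A) (x y z w : A) :
    PC f g b ((x ⊗ₜ y) ⊗ₜ (z ⊗ₜ w)) = f x ⊗ₜ (g z ⊗ₜ b w y) := by
  simp [PC]

def Th1 (c : A) : A ⊗[K] (A ⊗[K] A) →ₗ[K] A ⊗[K] (A ⊗[K] A) :=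
  map (lm μ c) (map β.toLinearMap β.toLinearMap)

@[simp] lemma Th1_tmul (c x y z : A) :
    Th1 μ β c (x ⊗ₜ (y ⊗ₜ z)) = μ (c ⊗ₜ x) ⊗ₜ (β y ⊗ₜ β z) := by
  simp [Th1]

def Th3 (c : A) : A ⊗[K] (A ⊗[K] A) →ₗ[K] A ⊗[K] (A ⊗[K] A) :=
  map LinearMap.id (map LinearMap.id (rm μ c ∘ₗ α.symm.toLinearMap))

@[simp] lemma Th3_tmul (c x y z : A) :
    Th3 μ α c (x ⊗ₜ (y ⊗ₜ z)) = x ⊗ₜ (y ⊗ₜ μ (α.symm z ⊗ₜ c)) := by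
  simp [Th3]

lemma stepT1 (f g : A →ₗ[K] A) (t : A ⊗[K] A) (s : A ⊗[K] A) :
    (TensorProduct.assoc K A A A) (map (C1 t μ α β ω) ψ (map f g s))
      = PA ((TensorProduct.curry μ).compl₁₂ (ω ∘ₗ α.symm.toLinearMap ∘ₗ f) LinearMap.id)
          β.toLinearMap (ψ ∘ₗ g) (s ⊗ₜ t) := by
  induction s using TensorProduct.induction_on with
  | zero => simp
  | tmul x y =>
    rw [map_tmul, map_tmul, C1_apply]
    induction t using TensorProduct.induction_on with
    | zero => simp
    | tmul z w => simp
    | add u v hu hv => simp only [map_add, add_tmul, tmul_add, hu, hv]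
  | add u v hu hv => simp only [map_add, add_tmul, hu, hv]

lemma stepT2 (f g : A →ₗ[K] A) (t : A ⊗[K] A) (s : A ⊗[K] A) :
    (TensorProduct.assoc K A A A) (map (C2 t μ α β ψ) ψ (map f g s))
      = PD α.toLinearMap ((TensorProduct.curry μ).compl₁₂ LinearMap.id (ψ ∘ₗ β.symm.toLinearMap ∘ₗ f))
          (ψ ∘ₗ g) (s ⊗ₜ t) := by
  induction s using TensorProduct.induction_on with
  | zero => simp
  | tmul x y =>
    rw [map_tmul, map_tmul, C2_apply]
    induction t using TensorProduct.induction_on with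
    | zero => simp
    | tmul z w => simp
    | add u v hu hv => simp only [map_add, add_tmul, tmul_add, hu, hv]
  | add u v hu hv => simp only [map_add, add_tmul, hu, hv]

lemma stepT3 (f g : A →ₗ[K] A) (s : A ⊗[K] A) :
    (TensorProduct.assoc K A A A) (map (C3 ω e) ψ (map f g s))
      = map (ω ∘ₗ f) ((TensorProduct.mk K A A e) ∘ₗ ψ ∘ₗ g) s := by
  induction s using TensorProduct.induction_on with
  | zero => simp
  | tmul x y => simp
  | add u v hu hv => simp only [map_add, hu, hv]

lemma stepS1 (f g : A →ₗ[K] A) (t : A ⊗[K] A) (s : A ⊗[K] A) :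
    map ω (C1 t μ α β ω) (map f g s)
      = PB (ω ∘ₗ f) ((TensorProduct.curry μ).compl₁₂ (ω ∘ₗ α.symm.toLinearMap ∘ₗ g) LinearMap.id)
          β.toLinearMap (s ⊗ₜ t) := by
  induction s using TensorProduct.induction_on with
  | zero => simp
  | tmul x y =>
    rw [map_tmul, map_tmul, C1_apply]
    induction t using TensorProduct.induction_on with
    | zero => simp
    | tmul z w => simp
    | add u v hu hv => simp only [map_add, add_tmul, tmul_add, hu, hv]
  | add u v hu hv => simp only [map_add, add_tmul, hu, hv]

lemma stepS2 (f g : A →ₗ[K] A) (t : A ⊗[K] A) (s : A ⊗[K] A) :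
    map ω (C2 t μ α β ψ) (map f g s)
      = PC (ω ∘ₗ f) α.toLinearMap
          ((TensorProduct.curry μ).compl₁₂ LinearMap.id (ψ ∘ₗ β.symm.toLinearMap ∘ₗ g)) (s ⊗ₜ t) := by
  induction s using TensorProduct.induction_on with
  | zero => simp
  | tmul x y =>
    rw [map_tmul, map_tmul, C2_apply]
    induction t using TensorProduct.induction_on with
    | zero => simp
    | tmul z w => simp
    | add u v hu hv => simp only [map_add, add_tmul, tmul_add, hu, hv]
  | add u v hu hv => simp only [map_add, add_tmul, hu, hv]

lemma stepS3 (f g : A →ₗ[K] A) (s : A ⊗[K] A) :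
    map ω (C3 ω e) (map f g s)
      = map (ω ∘ₗ f) (((TensorProduct.mk K A A).flip e) ∘ₗ ω ∘ₗ g) s := by
  induction s using TensorProduct.induction_on with
  | zero => simp
  | tmul x y => simp
  | add u v hu hv => simp only [map_add, hu, hv]

lemma stepT1' (u v : A) (t : A ⊗[K] A) :
    (TensorProduct.assoc K A A A) (map (C1 t μ α β ω) ψ (u ⊗ₜ v))
      = map (lm μ (ω (α.symm u))) (((TensorProduct.mk K A A).flip (ψ v)) ∘ₗ β.toLinearMap) t := by
  rw [map_tmul, C1_apply]; exact auxA _ _ _ t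

lemma stepT2' (u v : A) (t : A ⊗[K] A) :
    (TensorProduct.assoc K A A A) (map (C2 t μ α β ψ) ψ (u ⊗ₜ v))
      = map α.toLinearMap (((TensorProduct.mk K A A).flip (ψ v)) ∘ₗ rm μ (ψ (β.symm u))) t := by
  rw [map_tmul, C2_apply]; exact auxA _ _ _ t

lemma stepT3' (u v : A) :
    (TensorProduct.assoc K A A A) (map (C3 ω e) ψ (u ⊗ₜ v)) = ω u ⊗ₜ (e ⊗ₜ ψ v) := by
  simp [C3]

lemma stepS1' (u v : A) (t : A ⊗[K] A) :
    map ω (C1 t μ α β ω) (u ⊗ₜ v) = ω u ⊗ₜ map (lm μ (ω (α.symm v))) β.toLinearMap t := by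
  rw [map_tmul, C1_apply]

lemma stepS2' (u v : A) (t : A ⊗[K] A) :
    map ω (C2 t μ α β ψ) (u ⊗ₜ v) = ω u ⊗ₜ map α.toLinearMap (rm μ (ψ (β.symm v))) t := by
  rw [map_tmul, C2_apply]

lemma stepS3' (u v : A) :
    map ω (C3 ω e) (u ⊗ₜ v) = ω u ⊗ₜ (ω v ⊗ₜ e) := by
  simp [C3]

lemma mapl_sub (f₁ f₂ : A →ₗ[K] A ⊗[K] A) (g : A →ₗ[K] A) :
    (map (f₁ - f₂) g : A ⊗[K] A →ₗ[K] (A ⊗[K] A) ⊗[K] A) = map f₁ g - map f₂ g := by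
  apply TensorProduct.ext'; intro x y; simp [sub_tmul]

lemma mapr_sub (f : A →ₗ[K] A) (g₁ g₂ : A →ₗ[K] A ⊗[K] A) :
    (map f (g₁ - g₂) : A ⊗[K] A →ₗ[K] A ⊗[K] (A ⊗[K] A)) = map f g₁ - map f g₂ := by
  apply TensorProduct.ext'; intro x y; simp [tmul_sub]

lemma mm (f₁ g₁ f₂ g₂ : A →ₗ[K] A) (t : A ⊗[K] A) :
    map f₁ g₁ (map f₂ g₂ t) = map (f₁ ∘ₗ f₂) (g₁ ∘ₗ g₂) t := by
  rw [← LinearMap.comp_apply, ← TensorProduct.map_comp]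

end
end YBAux

set_option maxHeartbeats 4000000 in
open YBAux in
/-- if `r` solves the `λ`-associative BiHom-Yang-Baxter equation,
then `Δ_r` is BiHom-coassociative and `(A, μ, Δ_r, 1, α, β, ψ, ω)` is a
(unitary) `λ`-infBH-bialgebra. -/
theorem deltaR_coassoc_of_abhYBe
    (K : Type*) [Field K] (A : Type*) [AddCommGroup A] [Module K A]
    (lam : K) (μ : A ⊗[K] A →ₗ[K] A) (α β : A ≃ₗ[K] A) (ψ ω : A →ₗ[K] A)
    (e : A) (r : A ⊗[K] A)
    (halg : BiHomAssoc K A μ α.toLinearMap β.toLinearMap)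
    (hunit : IsUnitBH K A μ α.toLinearMap β.toLinearMap ψ ω e)
    (hαψ : α.toLinearMap ∘ₗ ψ = ψ ∘ₗ α.toLinearMap)
    (hαω : α.toLinearMap ∘ₗ ω = ω ∘ₗ α.toLinearMap)
    (hβψ : β.toLinearMap ∘ₗ ψ = ψ ∘ₗ β.toLinearMap)
    (hβω : β.toLinearMap ∘ₗ ω = ω ∘ₗ β.toLinearMap)
    (hψω : ψ ∘ₗ ω = ω ∘ₗ ψ)
    (hψm : ψ ∘ₗ μ = μ ∘ₗ TensorProduct.map ψ ψ)
    (hωm : ω ∘ₗ μ = μ ∘ₗ TensorProduct.map ω ω)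
    (hrα : TensorProduct.map α.toLinearMap α.toLinearMap r = r)
    (hrβ : TensorProduct.map β.toLinearMap β.toLinearMap r = r)
    (hrψ : TensorProduct.map ψ ψ r = r)
    (hrω : TensorProduct.map ω ω r = r)
    -- the λ-associative BiHom-Yang-Baxter equation
    (hYBe : R13R12 K A μ α.toLinearMap β.toLinearMap ψ ω r
        - R12R23 K A μ α.toLinearMap β.toLinearMap r
        + R23R13 K A μ α.toLinearMap β.toLinearMap ψ ω r
      = lam • R13E K A ψ ω e r) :
    BiHomCoassoc K A (DeltaR K A lam μ α β ψ ω e r) ψ ω ∧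
    IsInfBH K A lam μ (DeltaR K A lam μ α β ψ ω e r)
      α.toLinearMap β.toLinearMap ψ ω := by

  
  classical
  obtain ⟨hαβ, hαm, hβm, hass⟩ := id halg
  obtain ⟨hαe0, hβe0, hψe0, hωe0, hre0, hle0⟩ := id hunit
  have hαe' : α e = e := hαe0
  have hβe' : β e = e := hβe0
  have hψe' : ψ e = e := hψe0
  have hωe' : ω e = e := hωe0
  have ue1' : ∀ x : A, μ (x ⊗ₜ[K] e) = α x := hre0
  have ue2' : ∀ x : A, μ (e ⊗ₜ[K] x) = β x := hle0
  have heαi : α.symm e = e := by apply α.injective; rw [α.apply_symm_apply, hαe']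
  have heβi : β.symm e = e := by apply β.injective; rw [β.apply_symm_apply, hβe']
  have mα : ∀ x y : A, α (μ (x ⊗ₜ[K] y)) = μ (α x ⊗ₜ[K] α y) := hαm
  have mβ : ∀ x y : A, β (μ (x ⊗ₜ[K] y)) = μ (β x ⊗ₜ[K] β y) := hβm
  have mψ : ∀ x y : A, ψ (μ (x ⊗ₜ[K] y)) = μ (ψ x ⊗ₜ[K] ψ y) := fun x y => by
    simpa using LinearMap.congr_fun hψm (x ⊗ₜ[K] y)
  have mω : ∀ x y : A, ω (μ (x ⊗ₜ[K] y)) = μ (ω x ⊗ₜ[K] ω y) := fun x y => by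
    simpa using LinearMap.congr_fun hωm (x ⊗ₜ[K] y)
  have miα : ∀ x y : A, α.symm (μ (x ⊗ₜ[K] y)) = μ (α.symm x ⊗ₜ[K] α.symm y) := fun x y => by
    apply α.injective
    rw [α.apply_symm_apply, mα, α.apply_symm_apply, α.apply_symm_apply]
  have miβ : ∀ x y : A, β.symm (μ (x ⊗ₜ[K] y)) = μ (β.symm x ⊗ₜ[K] β.symm y) := fun x y => by
    apply β.injective
    rw [β.apply_symm_apply, mβ, β.apply_symm_apply, β.apply_symm_apply]
  have cαψ : ∀ x : A, α (ψ x) = ψ (α x) := fun x => LinearMap.congr_fun hαψ x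
  have cαω : ∀ x : A, α (ω x) = ω (α x) := fun x => LinearMap.congr_fun hαω x
  have cβψ : ∀ x : A, β (ψ x) = ψ (β x) := fun x => LinearMap.congr_fun hβψ x
  have cβω : ∀ x : A, β (ω x) = ω (β x) := fun x => LinearMap.congr_fun hβω x
  have cωψ : ∀ x : A, ω (ψ x) = ψ (ω x) := fun x => (LinearMap.congr_fun hψω x).symm
  have cαβ : ∀ x : A, α (β x) = β (α x) := fun x => LinearMap.congr_fun hαβ x
  have sαiψ : ∀ x : A, α.symm (ψ x) = ψ (α.symm x) := fun x => by
    apply α.injective; rw [α.apply_symm_apply, cαψ, α.apply_symm_apply]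
  have sαiω : ∀ x : A, α.symm (ω x) = ω (α.symm x) := fun x => by
    apply α.injective; rw [α.apply_symm_apply, cαω, α.apply_symm_apply]
  have sβiψ : ∀ x : A, β.symm (ψ x) = ψ (β.symm x) := fun x => by
    apply β.injective; rw [β.apply_symm_apply, cβψ, β.apply_symm_apply]
  have sβiω : ∀ x : A, β.symm (ω x) = ω (β.symm x) := fun x => by
    apply β.injective; rw [β.apply_symm_apply, cβω, β.apply_symm_apply]
  have sαiβ : ∀ x : A, α.symm (β x) = β (α.symm x) := fun x => by
    apply α.injective; rw [α.apply_symm_apply, cαβ, α.apply_symm_apply]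
  have sαβi : ∀ x : A, α (β.symm x) = β.symm (α x) := fun x => by
    apply β.injective; rw [β.apply_symm_apply, ← cαβ, β.apply_symm_apply]
  have sαiβi : ∀ x : A, α.symm (β.symm x) = β.symm (α.symm x) := fun x => by
    apply α.injective; rw [α.apply_symm_apply, sαβi, α.apply_symm_apply]
  have assL : ∀ u v w : A, μ (u ⊗ₜ[K] μ (v ⊗ₜ[K] w)) = μ (μ (α.symm u ⊗ₜ[K] v) ⊗ₜ[K] β w) := by
    intro u v w
    have h := hass (α.symm u) v w
    rw [show α.toLinearMap (α.symm u) = u from α.apply_symm_apply u] at h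
    exact h
  have hid : map (LinearMap.id : A →ₗ[K] A) LinearMap.id r = r := by
    rw [map_id]; rfl
  have hcomp : ∀ {f₁ f₂ g₁ g₂ : A →ₗ[K] A}, map f₁ f₂ r = r → map g₁ g₂ r = r →
      map (f₁ ∘ₗ g₁) (f₂ ∘ₗ g₂) r = r := by
    intro f₁ f₂ g₁ g₂ h1 h2
    rw [TensorProduct.map_comp, LinearMap.comp_apply, h2, h1]
  have hαii : α.symm.toLinearMap ∘ₗ α.toLinearMap = (LinearMap.id : A →ₗ[K] A) := by ext x; simp
  have hβii : β.symm.toLinearMap ∘ₗ β.toLinearMap = (LinearMap.id : A →ₗ[K] A) := by ext x; simp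
  have hrαi : map α.symm.toLinearMap α.symm.toLinearMap r = r := by
    calc map α.symm.toLinearMap α.symm.toLinearMap r
        = map α.symm.toLinearMap α.symm.toLinearMap (map α.toLinearMap α.toLinearMap r) := by
          rw [hrα]
      _ = map (α.symm.toLinearMap ∘ₗ α.toLinearMap) (α.symm.toLinearMap ∘ₗ α.toLinearMap) r :=
          mm _ _ _ _ r
      _ = r := by rw [hαii, map_id]; rfl
  have hrβi : map β.symm.toLinearMap β.symm.toLinearMap r = r := by
    calc map β.symm.toLinearMap β.symm.toLinearMap r
        = map β.symm.toLinearMap β.symm.toLinearMap (map β.toLinearMap β.toLinearMap r) := by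
          rw [hrβ]
      _ = map (β.symm.toLinearMap ∘ₗ β.toLinearMap) (β.symm.toLinearMap ∘ₗ β.toLinearMap) r :=
          mm _ _ _ _ r
      _ = r := by rw [hβii, map_id]; rfl
  have hrωαi := hcomp hrω hrαi
  have hrψβα := hcomp hrψ (hcomp hrβi hrα)
  have hrβαi := hcomp hrβ hrαi
  set Δ := DeltaR K A lam μ α β ψ ω e r with hΔdef
  have hΔC : Δ = C1 r μ α β ω - C2 r μ α β ψ - lam • C3 ω e := hΔdef
  have hXa : ∀ u : A, Δ u = map (lm μ (ω (α.symm u))) β.toLinearMap r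
      - map α.toLinearMap (rm μ (ψ (β.symm u))) r - lam • (ω u ⊗ₜ[K] e) := fun u => by
    rw [hΔC]
    simp only [LinearMap.sub_apply, LinearMap.smul_apply, C1_apply, C2_apply, C3_apply]
  -- ψ-comultiplicativity
  have hcψ : TensorProduct.map ψ ψ ∘ₗ Δ = Δ ∘ₗ ψ := by
    apply LinearMap.ext; intro a
    have W1 : map (ψ ∘ₗ lm μ (ω (α.symm a))) (ψ ∘ₗ β.toLinearMap) r
        = map (lm μ (ω (α.symm (ψ a)))) β.toLinearMap r :=
      subst1 r hid hrψ _ _ (fun x y => by simp only [LinearMap.coe_comp, Function.comp_apply, LinearMap.id_coe, id_eq, LinearEquiv.coe_coe, map_tmul, assoc_tmul, assoc_symm_tmul, comm_tmul, tensorTensorTensorComm_tmul, lift.tmul, curry_apply, LinearMap.compl₁₂_apply, mk_apply, LinearMap.flip_apply, PA_tmul, PB_tmul, PC_tmul, PD_tmul, Th1_tmul, Th3_tmul, LinearEquiv.apply_symm_apply, LinearEquiv.symm_apply_apply, lm_apply, rm_apply, hαe', hβe', hψe', hωe', heαi, heβi, ue1', ue2', mα, mβ, mψ, mω, miα, miβ,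 cωψ, cβψ, cβω, cαψ, cαω, cαβ, sβiψ, sβiω, sαiψ, sαiω, sαiβi, sαiβ, sαβi, assL])
    have W2 : map (ψ ∘ₗ α.toLinearMap) (ψ ∘ₗ rm μ (ψ (β.symm a))) r
        = map α.toLinearMap (rm μ (ψ (β.symm (ψ a)))) r :=
      subst1 r hid hrψ _ _ (fun x y => by simp only [LinearMap.coe_comp, Function.comp_apply, LinearMap.id_coe, id_eq, LinearEquiv.coe_coe, map_tmul, assoc_tmul, assoc_symm_tmul, comm_tmul, tensorTensorTensorComm_tmul, lift.tmul, curry_apply, LinearMap.compl₁₂_apply, mk_apply, LinearMap.flip_apply, PA_tmul, PB_tmul, PC_tmul, PD_tmul, Th1_tmul, Th3_tmul, LinearEquiv.apply_symm_apply, LinearEquiv.symm_apply_apply, lm_apply, rm_apply, hαe', hβe', hψe', hωe', heαi, heβi, ue1', ue2', mα, mβ, mψ, mω, miα, miβ, cωψ, cβψ, cβω, cαψ, cαω, cαβ, sβiψ, sβiω, sαiψ, sαiω, sαiβi, sαiβ, sαβi, assL])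
    have W3 : (ψ (ω a) ⊗ₜ[K] ψ e : A ⊗[K] A) = ω (ψ a) ⊗ₜ[K] e := by
      rw [hψe', ← cωψ]
    simp only [LinearMap.comp_apply]
    rw [hXa a, hXa (ψ a)]
    simp only [map_sub, map_smul, map_tmul, mm]
    linear_combination (norm := module) W1 - W2 - lam • W3
  have hcω : TensorProduct.map ω ω ∘ₗ Δ = Δ ∘ₗ ω := by
    apply LinearMap.ext; intro a
    have W1 : map (ω ∘ₗ lm μ (ω (α.symm a))) (ω ∘ₗ β.toLinearMap) r
        = map (lm μ (ω (α.symm (ω a)))) β.toLinearMap r :=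
      subst1 r hid hrω _ _ (fun x y => by simp only [LinearMap.coe_comp, Function.comp_apply, LinearMap.id_coe, id_eq, LinearEquiv.coe_coe, map_tmul, assoc_tmul, assoc_symm_tmul, comm_tmul, tensorTensorTensorComm_tmul, lift.tmul, curry_apply, LinearMap.compl₁₂_apply, mk_apply, LinearMap.flip_apply, PA_tmul, PB_tmul, PC_tmul, PD_tmul, Th1_tmul, Th3_tmul, LinearEquiv.apply_symm_apply, LinearEquiv.symm_apply_apply, lm_apply, rm_apply, hαe', hβe', hψe', hωe', heαi, heβi, ue1', ue2', mα, mβ, mψ, mω, miα, miβ, cωψ, cβψ, cβω, cαψ, cαω, cαβ, sβiψ, sβiω, sαiψ, sαiω, sαiβi, sαiβ, sαβi, assL])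
    have W2 : map (ω ∘ₗ α.toLinearMap) (ω ∘ₗ rm μ (ψ (β.symm a))) r
        = map α.toLinearMap (rm μ (ψ (β.symm (ω a)))) r :=
      subst1 r hid hrω _ _ (fun x y => by simp only [LinearMap.coe_comp, Function.comp_apply, LinearMap.id_coe, id_eq, LinearEquiv.coe_coe, map_tmul, assoc_tmul, assoc_symm_tmul, comm_tmul, tensorTensorTensorComm_tmul, lift.tmul, curry_apply, LinearMap.compl₁₂_apply, mk_apply, LinearMap.flip_apply, PA_tmul, PB_tmul, PC_tmul, PD_tmul, Th1_tmul, Th3_tmul, LinearEquiv.apply_symm_apply, LinearEquiv.symm_apply_apply, lm_apply, rm_apply, hαe', hβe', hψe', hωe', heαi, heβi, ue1', ue2', mα, mβ, mψ, mω, miα, miβ, cωψ, cβψ, cβω, cαψ, cαω, cαβ, sβiψ, sβiω, sαiψ, sαiω, sαiβi, sαiβ, sαβi, assL])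
    have W3 : (ω (ω a) ⊗ₜ[K] ω e : A ⊗[K] A) = ω (ω a) ⊗ₜ[K] e := by rw [hωe']
    simp only [LinearMap.comp_apply]
    rw [hXa a, hXa (ω a)]
    simp only [map_sub, map_smul, map_tmul, mm]
    linear_combination (norm := module) W1 - W2 - lam • W3
  have hcα : TensorProduct.map α.toLinearMap α.toLinearMap ∘ₗ Δ = Δ ∘ₗ α.toLinearMap := by
    apply LinearMap.ext; intro a
    have W1 : map (α.toLinearMap ∘ₗ lm μ (ω (α.symm a))) (α.toLinearMap ∘ₗ β.toLinearMap) r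
        = map (lm μ (ω (α.symm (α a)))) β.toLinearMap r :=
      subst1 r hid hrα _ _ (fun x y => by simp only [LinearMap.coe_comp, Function.comp_apply, LinearMap.id_coe, id_eq, LinearEquiv.coe_coe, map_tmul, assoc_tmul, assoc_symm_tmul, comm_tmul, tensorTensorTensorComm_tmul, lift.tmul, curry_apply, LinearMap.compl₁₂_apply, mk_apply, LinearMap.flip_apply, PA_tmul, PB_tmul, PC_tmul, PD_tmul, Th1_tmul, Th3_tmul, LinearEquiv.apply_symm_apply, LinearEquiv.symm_apply_apply, lm_apply, rm_apply, hαe', hβe', hψe', hωe', heαi, heβi, ue1', ue2', mα, mβ, mψ, mω, miα, miβ, cωψ, cβψ, cβω, cαψ, cαω, cαβ, sβiψ, sβiω, sαiψ, sαiω, sαiβi, sαiβ, sαβi, assL])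
    have W2 : map (α.toLinearMap ∘ₗ α.toLinearMap) (α.toLinearMap ∘ₗ rm μ (ψ (β.symm a))) r
        = map α.toLinearMap (rm μ (ψ (β.symm (α a)))) r :=
      subst1 r hid hrα _ _ (fun x y => by simp only [LinearMap.coe_comp, Function.comp_apply, LinearMap.id_coe, id_eq, LinearEquiv.coe_coe, map_tmul, assoc_tmul, assoc_symm_tmul, comm_tmul, tensorTensorTensorComm_tmul, lift.tmul, curry_apply, LinearMap.compl₁₂_apply, mk_apply, LinearMap.flip_apply, PA_tmul, PB_tmul, PC_tmul, PD_tmul, Th1_tmul, Th3_tmul, LinearEquiv.apply_symm_apply, LinearEquiv.symm_apply_apply, lm_apply, rm_apply, hαe', hβe', hψe', hωe', heαi, heβi, ue1', ue2', mα, mβ, mψ, mω, miα, miβ, cωψ, cβψ, cβω, cαψ, cαω, cαβ, sβiψ, sβiω, sαiψ, sαiω, sαiβi, sαiβ, sαβi, assL])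
    have W3 : (α (ω a) ⊗ₜ[K] α e : A ⊗[K] A) = ω (α a) ⊗ₜ[K] e := by rw [hαe', cαω]
    simp only [LinearMap.comp_apply, LinearEquiv.coe_coe]
    rw [hXa a, hXa (α a)]
    simp only [map_sub, map_smul, map_tmul, mm]
    linear_combination (norm := module) W1 - W2 - lam • W3
  have hcβ : TensorProduct.map β.toLinearMap β.toLinearMap ∘ₗ Δ = Δ ∘ₗ β.toLinearMap := by
    apply LinearMap.ext; intro a
    have W1 : map (β.toLinearMap ∘ₗ lm μ (ω (α.symm a))) (β.toLinearMap ∘ₗ β.toLinearMap) r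
        = map (lm μ (ω (α.symm (β a)))) β.toLinearMap r :=
      subst1 r hid hrβ _ _ (fun x y => by simp only [LinearMap.coe_comp, Function.comp_apply, LinearMap.id_coe, id_eq, LinearEquiv.coe_coe, map_tmul, assoc_tmul, assoc_symm_tmul, comm_tmul, tensorTensorTensorComm_tmul, lift.tmul, curry_apply, LinearMap.compl₁₂_apply, mk_apply, LinearMap.flip_apply, PA_tmul, PB_tmul, PC_tmul, PD_tmul, Th1_tmul, Th3_tmul, LinearEquiv.apply_symm_apply, LinearEquiv.symm_apply_apply, lm_apply, rm_apply, hαe', hβe', hψe', hωe', heαi, heβi, ue1', ue2', mα, mβ, mψ, mω, miα, miβ, cωψ, cβψ, cβω, cαψ, cαω, cαβ, sβiψ, sβiω, sαiψ, sαiω, sαiβi, sαiβ, sαβi, assL])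
    have W2 : map (β.toLinearMap ∘ₗ α.toLinearMap) (β.toLinearMap ∘ₗ rm μ (ψ (β.symm a))) r
        = map α.toLinearMap (rm μ (ψ (β.symm (β a)))) r :=
      subst1 r hid hrβ _ _ (fun x y => by simp only [LinearMap.coe_comp, Function.comp_apply, LinearMap.id_coe, id_eq, LinearEquiv.coe_coe, map_tmul, assoc_tmul, assoc_symm_tmul, comm_tmul, tensorTensorTensorComm_tmul, lift.tmul, curry_apply, LinearMap.compl₁₂_apply, mk_apply, LinearMap.flip_apply, PA_tmul, PB_tmul, PC_tmul, PD_tmul, Th1_tmul, Th3_tmul, LinearEquiv.apply_symm_apply, LinearEquiv.symm_apply_apply, lm_apply, rm_apply, hαe', hβe', hψe', hωe', heαi, heβi, ue1', ue2', mα, mβ, mψ, mω, miα, miβ, cωψ, cβψ, cβω, cαψ, cαω, cαβ, sβiψ, sβiω, sαiψ, sαiω, sαiβi, sαiβ, sαβi, assL])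
    have W3 : (β (ω a) ⊗ₜ[K] β e : A ⊗[K] A) = ω (β a) ⊗ₜ[K] e := by rw [hβe', cβω]
    simp only [LinearMap.comp_apply, LinearEquiv.coe_coe]
    rw [hXa a, hXa (β a)]
    simp only [map_sub, map_smul, map_tmul, mm]
    linear_combination (norm := module) W1 - W2 - lam • W3
  -- the compatibility (λ-derivation property)
  have hcompat : InfBHCompat K A lam μ Δ α.toLinearMap β.toLinearMap ψ ω := by
    intro a b
    have N1 : map (lm μ (ω (α.symm (μ (a ⊗ₜ[K] b))))) β.toLinearMap r
        = map (lm μ (ω a) ∘ₗ lm μ (ω (α.symm b))) (β.toLinearMap ∘ₗ β.toLinearMap) r :=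
      subst1 r hrβ hid _ _ (fun x y => by simp only [LinearMap.coe_comp, Function.comp_apply, LinearMap.id_coe, id_eq, LinearEquiv.coe_coe, map_tmul, assoc_tmul, assoc_symm_tmul, comm_tmul, tensorTensorTensorComm_tmul, lift.tmul, curry_apply, LinearMap.compl₁₂_apply, mk_apply, LinearMap.flip_apply, PA_tmul, PB_tmul, PC_tmul, PD_tmul, Th1_tmul, Th3_tmul, LinearEquiv.apply_symm_apply, LinearEquiv.symm_apply_apply, lm_apply, rm_apply, hαe', hβe', hψe', hωe', heαi, heβi, ue1', ue2', mα, mβ, mψ, mω, miα, miβ, cωψ, cβψ, cβω, cαψ, cαω, cαβ, sβiψ, sβiω, sαiψ, sαiω, sαiβi, sαiβ, sαβi, assL])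
    have N2 : map α.toLinearMap (rm μ (ψ (β.symm (μ (a ⊗ₜ[K] b))))) r
        = map (α.toLinearMap ∘ₗ α.toLinearMap) (rm μ (ψ b) ∘ₗ rm μ (ψ (β.symm a))) r :=
      subst1 r hrα hid _ _ (fun x y => by simp only [LinearMap.coe_comp, Function.comp_apply, LinearMap.id_coe, id_eq, LinearEquiv.coe_coe, map_tmul, assoc_tmul, assoc_symm_tmul, comm_tmul, tensorTensorTensorComm_tmul, lift.tmul, curry_apply, LinearMap.compl₁₂_apply, mk_apply, LinearMap.flip_apply, PA_tmul, PB_tmul, PC_tmul, PD_tmul, Th1_tmul, Th3_tmul, LinearEquiv.apply_symm_apply, LinearEquiv.symm_apply_apply, lm_apply, rm_apply, hαe', hβe', hψe', hωe', heαi, heβi, ue1', ue2', mα, mβ, mψ, mω, miα, miβ, cωψ, cβψ, cβω, cαψ, cαω, cαβ, sβiψ, sβiω, sαiψ, sαiω, sαiβi, sαiβ, sαβi, assL])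
    have N3 : map (lm μ (ω a) ∘ₗ α.toLinearMap) (β.toLinearMap ∘ₗ rm μ (ψ (β.symm b))) r
        = map (α.toLinearMap ∘ₗ lm μ (ω (α.symm a))) (rm μ (ψ b) ∘ₗ β.toLinearMap) r :=
      subst1 r hid hid _ _ (fun x y => by simp only [LinearMap.coe_comp, Function.comp_apply, LinearMap.id_coe, id_eq, LinearEquiv.coe_coe, map_tmul, assoc_tmul, assoc_symm_tmul, comm_tmul, tensorTensorTensorComm_tmul, lift.tmul, curry_apply, LinearMap.compl₁₂_apply, mk_apply, LinearMap.flip_apply, PA_tmul, PB_tmul, PC_tmul, PD_tmul, Th1_tmul, Th3_tmul, LinearEquiv.apply_symm_apply, LinearEquiv.symm_apply_apply, lm_apply, rm_apply, hαe', hβe', hψe', hωe', heαi, heβi, ue1', ue2', mα, mβ, mψ, mω, miα, miβ, cωψ, cβψ, cβω, cαψ, cαω, cαβ, sβiψ, sβiω, sαiψ, sαiω, sαiβi, sαiβ, sαβi, assL])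
    have N4 : (ω (μ (a ⊗ₜ[K] b)) ⊗ₜ[K] e : A ⊗[K] A) = μ (ω a ⊗ₜ[K] ω b) ⊗ₜ[K] β e := by
      rw [mω, hβe']
    have N5 : (α (ω a) ⊗ₜ[K] μ (e ⊗ₜ[K] ψ b) : A ⊗[K] A) = α (ω a) ⊗ₜ[K] β (ψ b) := by
      rw [ue2']
    rw [hXa (μ (a ⊗ₜ[K] b)), hXa a, hXa b]
    simp only [tmul_sub, sub_tmul, tmul_smul, ← smul_tmul', map_sub, map_smul, aux1, aux2, mm,
      map_tmul, lm_apply, rm_apply, LinearEquiv.coe_coe]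
    linear_combination (norm := module) N1 - N2 + N3 - lam • N4 + lam • N5
  -- BiHom-coassociativity
  have hco4 : (TensorProduct.assoc K A A A).toLinearMap ∘ₗ TensorProduct.map Δ ψ ∘ₗ Δ
      = TensorProduct.map ω Δ ∘ₗ Δ := by
    apply LinearMap.ext; intro a
    have hY1r : R13R12 K A μ α.toLinearMap β.toLinearMap ψ ω r
        = (TensorProduct.map (μ ∘ₗ TensorProduct.map ω LinearMap.id)
            ((TensorProduct.comm K A A).toLinearMap ∘ₗ TensorProduct.map (α.toLinearMap ∘ₗ ψ) β.toLinearMap)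
          ∘ₗ (TensorProduct.tensorTensorTensorComm K A A A A).toLinearMap) (r ⊗ₜ[K] r) := rfl
    have hY2r : R12R23 K A μ α.toLinearMap β.toLinearMap r
        = (TensorProduct.map α.toLinearMap
            (TensorProduct.map μ β.toLinearMap ∘ₗ (TensorProduct.assoc K A A A).symm.toLinearMap)
          ∘ₗ (TensorProduct.assoc K A A (A ⊗[K] A)).toLinearMap) (r ⊗ₜ[K] r) := rfl
    have hY3r : R23R13 K A μ α.toLinearMap β.toLinearMap ψ ω r
        = ((TensorProduct.assoc K A A A).toLinearMap
          ∘ₗ TensorProduct.map (TensorProduct.map (β.toLinearMap ∘ₗ ω) α.toLinearMap)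
            (μ ∘ₗ TensorProduct.map LinearMap.id ψ ∘ₗ (TensorProduct.comm K A A).toLinearMap)
          ∘ₗ (TensorProduct.tensorTensorTensorComm K A A A A).toLinearMap) (r ⊗ₜ[K] r) := rfl
    have hY4r : R13E K A ψ ω e r = (TensorProduct.map ω ((TensorProduct.mk K A A e) ∘ₗ ψ)) r := rfl
    have M1 : PA ((TensorProduct.curry μ).compl₁₂ (ω ∘ₗ α.symm.toLinearMap ∘ₗ lm μ (ω (α.symm a))) LinearMap.id)
          β.toLinearMap (ψ ∘ₗ β.toLinearMap) (r ⊗ₜ[K] r)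
        = Th1 μ β (ω (ω (α.symm a))) (R13R12 K A μ α.toLinearMap β.toLinearMap ψ ω r) := by
      rw [hY1r, ← LinearMap.comp_apply]
      exact subst2 r hid hid hrαi hrβi _ _ (fun x y z w => by simp only [LinearMap.coe_comp, Function.comp_apply, LinearMap.id_coe, id_eq, LinearEquiv.coe_coe, map_tmul, assoc_tmul, assoc_symm_tmul, comm_tmul, tensorTensorTensorComm_tmul, lift.tmul, curry_apply, LinearMap.compl₁₂_apply, mk_apply, LinearMap.flip_apply, PA_tmul, PB_tmul, PC_tmul, PD_tmul, Th1_tmul, Th3_tmul, LinearEquiv.apply_symm_apply, LinearEquiv.symm_apply_apply, lm_apply, rm_apply, hαe', hβe', hψe', hωe', heαi, heβi, ue1', ue2', mα, mβ, mψ, mω, miα, miβ, cωψ, cβψ, cβω, cαψ, cαω, cαβ, sβiψ, sβiω, sαiψ, sαiω, sαiβi, sαiβ, sαβi, assL])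
    have M2 : PB (ω ∘ₗ lm μ (ω (α.symm a)))
          ((TensorProduct.curry μ).compl₁₂ (ω ∘ₗ α.symm.toLinearMap ∘ₗ β.toLinearMap) LinearMap.id)
          β.toLinearMap (r ⊗ₜ[K] r)
        = Th1 μ β (ω (ω (α.symm a))) (R12R23 K A μ α.toLinearMap β.toLinearMap r) := by
      rw [hY2r, ← LinearMap.comp_apply]
      exact subst2 r hid hid hrωαi hrβi _ _ (fun x y z w => by simp only [LinearMap.coe_comp, Function.comp_apply, LinearMap.id_coe, id_eq, LinearEquiv.coe_coe, map_tmul, assoc_tmul, assoc_symm_tmul, comm_tmul, tensorTensorTensorComm_tmul, lift.tmul, curry_apply, LinearMap.compl₁₂_apply, mk_apply, LinearMap.flip_apply, PA_tmul, PB_tmul, PC_tmul, PD_tmul, Th1_tmul, Th3_tmul, LinearEquiv.apply_symm_apply, LinearEquiv.symm_apply_apply, lm_apply, rm_apply, hαe', hβe', hψe', hωe', heαi, heβi, ue1', ue2', mα, mβ, mψ, mω, miα, miβ, cωψ, cβψ, cβω, cαψ, cαω, cαβ, sβiψ, sβiω, sαiψ, sαiω, sαiβi, sαiβ, sαβi,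 assL])
    have M3 : PC (ω ∘ₗ lm μ (ω (α.symm a))) α.toLinearMap
          ((TensorProduct.curry μ).compl₁₂ LinearMap.id (ψ ∘ₗ β.symm.toLinearMap ∘ₗ β.toLinearMap)) (r ⊗ₜ[K] r)
        = Th1 μ β (ω (ω (α.symm a))) (R23R13 K A μ α.toLinearMap β.toLinearMap ψ ω r) := by
      rw [hY3r, ← LinearMap.comp_apply]
      exact subst2 r hid hid hrβi hrβi _ _ (fun x y z w => by simp only [LinearMap.coe_comp, Function.comp_apply, LinearMap.id_coe, id_eq, LinearEquiv.coe_coe, map_tmul, assoc_tmul, assoc_symm_tmul, comm_tmul, tensorTensorTensorComm_tmul, lift.tmul, curry_apply, LinearMap.compl₁₂_apply, mk_apply, LinearMap.flip_apply, PA_tmul, PB_tmul, PC_tmul, PD_tmul, Th1_tmul, Th3_tmul, LinearEquiv.apply_symm_apply, LinearEquiv.symm_apply_apply, lm_apply, rm_apply, hαe', hβe', hψe', hωe', heαi, heβi, ue1', ue2', mα, mβ, mψ, mω, miα, miβ, cωψ, cβψ, cβω, cαψ, cαω, cαβ, sβiψ, sβiω, sαiψ, sαiω, sαiβi, sαiβ,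 sαβi, assL])
    have M4 : map (ω ∘ₗ lm μ (ω (α.symm a))) ((TensorProduct.mk K A A e) ∘ₗ ψ ∘ₗ β.toLinearMap) r
        = Th1 μ β (ω (ω (α.symm a))) (R13E K A ψ ω e r) := by
      rw [hY4r, ← LinearMap.comp_apply]
      exact subst1 r hid hid _ _ (fun x y => by simp only [LinearMap.coe_comp, Function.comp_apply, LinearMap.id_coe, id_eq, LinearEquiv.coe_coe, map_tmul, assoc_tmul, assoc_symm_tmul, comm_tmul, tensorTensorTensorComm_tmul, lift.tmul, curry_apply, LinearMap.compl₁₂_apply, mk_apply, LinearMap.flip_apply, PA_tmul, PB_tmul, PC_tmul, PD_tmul, Th1_tmul, Th3_tmul, LinearEquiv.apply_symm_apply, LinearEquiv.symm_apply_apply, lm_apply, rm_apply, hαe', hβe', hψe', hωe', heαi, heβi, ue1', ue2', mα, mβ, mψ, mω, miα, miβ, cωψ, cβψ, cβω, cαψ, cαω, cαβ, sβiψ, sβiω, sαiψ, sαiω, sαiβi, sαiβ, sαβi, assL])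
    have M5 : PA ((TensorProduct.curry μ).compl₁₂ (ω ∘ₗ α.symm.toLinearMap ∘ₗ α.toLinearMap) LinearMap.id)
          β.toLinearMap (ψ ∘ₗ rm μ (ψ (β.symm a))) (r ⊗ₜ[K] r)
        = Th3 μ α (ψ (ψ (β.symm a))) (R13R12 K A μ α.toLinearMap β.toLinearMap ψ ω r) := by
      rw [hY1r, ← LinearMap.comp_apply]
      exact subst2 r hid hid hid hid _ _ (fun x y z w => by simp only [LinearMap.coe_comp, Function.comp_apply, LinearMap.id_coe, id_eq, LinearEquiv.coe_coe, map_tmul, assoc_tmul, assoc_symm_tmul, comm_tmul, tensorTensorTensorComm_tmul, lift.tmul, curry_apply, LinearMap.compl₁₂_apply, mk_apply, LinearMap.flip_apply, PA_tmul, PB_tmul, PC_tmul, PD_tmul, Th1_tmul, Th3_tmul, LinearEquiv.apply_symm_apply, LinearEquiv.symm_apply_apply, lm_apply, rm_apply, hαe', hβe', hψe', hωe', heαi, heβi, ue1', ue2', mα, mβ, mψ, mω, miα, miβ, cωψ, cβψ, cβω, cαψ, cαω, cαβ, sβiψ, sβiω, sαiψ, sαiω, sαiβi, sαiβ, sαβi,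 assL])
    have M6 : PD α.toLinearMap
          ((TensorProduct.curry μ).compl₁₂ LinearMap.id (ψ ∘ₗ β.symm.toLinearMap ∘ₗ α.toLinearMap))
          (ψ ∘ₗ rm μ (ψ (β.symm a))) (r ⊗ₜ[K] r)
        = Th3 μ α (ψ (ψ (β.symm a))) (R12R23 K A μ α.toLinearMap β.toLinearMap r) := by
      rw [hY2r, ← LinearMap.comp_apply]
      exact subst2_swap r hid hid hid hrψβα _ _ (fun x y z w => by simp only [LinearMap.coe_comp, Function.comp_apply, LinearMap.id_coe, id_eq, LinearEquiv.coe_coe, map_tmul, assoc_tmul, assoc_symm_tmul, comm_tmul, tensorTensorTensorComm_tmul, lift.tmul, curry_apply, LinearMap.compl₁₂_apply, mk_apply, LinearMap.flip_apply, PA_tmul, PB_tmul, PC_tmul, PD_tmul, Th1_tmul, Th3_tmul, LinearEquiv.apply_symm_apply, LinearEquiv.symm_apply_apply, lm_apply, rm_apply, hαe', hβe', hψe', hωe', heαi, heβi, ue1', ue2', mα, mβ, mψ, mω, miα, miβ, cωψ, cβψ, cβω, cαψ, cαω, cαβ, sβiψ, sβiω, sαiψ, sαiω, sαiβi, sαiβ,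 sαβi, assL])
    have M7 : PC (ω ∘ₗ α.toLinearMap) α.toLinearMap
          ((TensorProduct.curry μ).compl₁₂ LinearMap.id (ψ ∘ₗ β.symm.toLinearMap ∘ₗ rm μ (ψ (β.symm a)))) (r ⊗ₜ[K] r)
        = Th3 μ α (ψ (ψ (β.symm a))) (R23R13 K A μ α.toLinearMap β.toLinearMap ψ ω r) := by
      rw [hY3r, ← LinearMap.comp_apply]
      exact subst2 r hrβ hid hrα hid _ _ (fun x y z w => by simp only [LinearMap.coe_comp, Function.comp_apply, LinearMap.id_coe, id_eq, LinearEquiv.coe_coe, map_tmul, assoc_tmul, assoc_symm_tmul, comm_tmul, tensorTensorTensorComm_tmul, lift.tmul, curry_apply, LinearMap.compl₁₂_apply, mk_apply, LinearMap.flip_apply, PA_tmul, PB_tmul, PC_tmul, PD_tmul, Th1_tmul, Th3_tmul, LinearEquiv.apply_symm_apply, LinearEquiv.symm_apply_apply, lm_apply, rm_apply, hαe', hβe', hψe', hωe', heαi, heβi, ue1', ue2', mα, mβ, mψ, mω, miα, miβ, cωψ, cβψ, cβω, cαψ, cαω, cαβ, sβiψ, sβiω, sαiψ, sαiω, sαiβi,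 sαiβ, sαβi, assL])
    have M8 : map (ω ∘ₗ α.toLinearMap) ((TensorProduct.mk K A A e) ∘ₗ ψ ∘ₗ rm μ (ψ (β.symm a))) r
        = Th3 μ α (ψ (ψ (β.symm a))) (R13E K A ψ ω e r) := by
      rw [hY4r, ← LinearMap.comp_apply]
      exact subst1 r hid hrα _ _ (fun x y => by simp only [LinearMap.coe_comp, Function.comp_apply, LinearMap.id_coe, id_eq, LinearEquiv.coe_coe, map_tmul, assoc_tmul, assoc_symm_tmul, comm_tmul, tensorTensorTensorComm_tmul, lift.tmul, curry_apply, LinearMap.compl₁₂_apply, mk_apply, LinearMap.flip_apply, PA_tmul, PB_tmul, PC_tmul, PD_tmul, Th1_tmul, Th3_tmul, LinearEquiv.apply_symm_apply, LinearEquiv.symm_apply_apply, lm_apply, rm_apply, hαe', hβe', hψe', hωe', heαi, heβi, ue1', ue2', mα, mβ, mψ, mω, miα, miβ, cωψ, cβψ, cβω, cαψ, cαω, cαβ, sβiψ, sβiω, sαiψ, sαiω, sαiβi, sαiβ, sαβi, assL])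
    have M9 : PD α.toLinearMap
          ((TensorProduct.curry μ).compl₁₂ LinearMap.id (ψ ∘ₗ β.symm.toLinearMap ∘ₗ lm μ (ω (α.symm a))))
          (ψ ∘ₗ β.toLinearMap) (r ⊗ₜ[K] r)
        = PB (ω ∘ₗ α.toLinearMap)
          ((TensorProduct.curry μ).compl₁₂ (ω ∘ₗ α.symm.toLinearMap ∘ₗ rm μ (ψ (β.symm a))) LinearMap.id)
          β.toLinearMap (r ⊗ₜ[K] r) :=
      subst2_swap r hid hrω hid hrψ _ _ (fun x y z w => by simp only [LinearMap.coe_comp, Function.comp_apply, LinearMap.id_coe, id_eq, LinearEquiv.coe_coe, map_tmul, assoc_tmul, assoc_symm_tmul, comm_tmul, tensorTensorTensorComm_tmul, lift.tmul, curry_apply, LinearMap.compl₁₂_apply, mk_apply, LinearMap.flip_apply, PA_tmul, PB_tmul, PC_tmul, PD_tmul, Th1_tmul, Th3_tmul, LinearEquiv.apply_symm_apply, LinearEquiv.symm_apply_apply, lm_apply, rm_apply, hαe', hβe', hψe', hωe', heαi, heβi, ue1', ue2', mα, mβ, mψ, mω, miα, miβ, cωψ, cβψ, cβω, cαψ, cαω,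 cαβ, sβiψ, sβiω, sαiψ, sαiω, sαiβi, sαiβ, sαβi, assL])
    have M10 : map (lm μ (ω (α.symm (ω a)))) (((TensorProduct.mk K A A).flip (ψ e)) ∘ₗ β.toLinearMap) r
        = map (ω ∘ₗ lm μ (ω (α.symm a))) (((TensorProduct.mk K A A).flip e) ∘ₗ ω ∘ₗ β.toLinearMap) r :=
      subst1 r hrω hid _ _ (fun x y => by simp only [LinearMap.coe_comp, Function.comp_apply, LinearMap.id_coe, id_eq, LinearEquiv.coe_coe, map_tmul, assoc_tmul, assoc_symm_tmul, comm_tmul, tensorTensorTensorComm_tmul, lift.tmul, curry_apply, LinearMap.compl₁₂_apply, mk_apply, LinearMap.flip_apply, PA_tmul, PB_tmul, PC_tmul, PD_tmul, Th1_tmul, Th3_tmul, LinearEquiv.apply_symm_apply, LinearEquiv.symm_apply_apply, lm_apply, rm_apply, hαe', hβe', hψe', hωe', heαi, heβi, ue1', ue2', mα, mβ, mψ, mω, miα, miβ, cωψ, cβψ, cβω, cαψ, cαω, cαβ, sβiψ, sβiω, sαiψ, sαiω, sαiβi, sαiβ, sαβi, assL])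
    have M11 : map α.toLinearMap (((TensorProduct.mk K A A).flip (ψ e)) ∘ₗ rm μ (ψ (β.symm (ω a)))) r
        = map (ω ∘ₗ α.toLinearMap) (((TensorProduct.mk K A A).flip e) ∘ₗ ω ∘ₗ rm μ (ψ (β.symm a))) r :=
      subst1 r hrω hid _ _ (fun x y => by simp only [LinearMap.coe_comp, Function.comp_apply, LinearMap.id_coe, id_eq, LinearEquiv.coe_coe, map_tmul, assoc_tmul, assoc_symm_tmul, comm_tmul, tensorTensorTensorComm_tmul, lift.tmul, curry_apply, LinearMap.compl₁₂_apply, mk_apply, LinearMap.flip_apply, PA_tmul, PB_tmul, PC_tmul, PD_tmul, Th1_tmul, Th3_tmul, LinearEquiv.apply_symm_apply, LinearEquiv.symm_apply_apply, lm_apply, rm_apply, hαe', hβe', hψe', hωe', heαi, heβi, ue1', ue2', mα, mβ, mψ, mω, miα, miβ, cωψ, cβψ, cβω, cαψ, cαω, cαβ, sβiψ, sβiω, sαiψ, sαiω, sαiβi, sαiβ, sαβi, assL])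
    have M12 : (ω (ω a) ⊗ₜ[K] map (lm μ (ω (α.symm e))) β.toLinearMap r : A ⊗[K] (A ⊗[K] A))
        = ω (ω a) ⊗ₜ[K] map α.toLinearMap (rm μ (ψ (β.symm e))) r := by
      have inner : map (lm μ (ω (α.symm e))) β.toLinearMap r
          = map α.toLinearMap (rm μ (ψ (β.symm e))) r :=
        subst1 r hid hrβαi _ _ (fun x y => by simp only [LinearMap.coe_comp, Function.comp_apply, LinearMap.id_coe, id_eq, LinearEquiv.coe_coe, map_tmul, assoc_tmul, assoc_symm_tmul, comm_tmul, tensorTensorTensorComm_tmul, lift.tmul, curry_apply, LinearMap.compl₁₂_apply, mk_apply, LinearMap.flip_apply, PA_tmul, PB_tmul, PC_tmul, PD_tmul, Th1_tmul, Th3_tmul, LinearEquiv.apply_symm_apply, LinearEquiv.symm_apply_apply, lm_apply, rm_apply, hαe', hβe', hψe', hωe', heαi, heβi, ue1', ue2', mα, mβ, mψ, mω, miα, miβ, cωψ, cβψ, cβω, cαψ, cαω, cαβ, sβiψ, sβiω, sαiψ, sαiω, sαiβi, sαiβ, sαβi, assL])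
      rw [inner]
    have M13 : (ω (ω a) ⊗ₜ[K] (e ⊗ₜ[K] ψ e) : A ⊗[K] (A ⊗[K] A)) = ω (ω a) ⊗ₜ[K] (ω e ⊗ₜ[K] e) := by
      rw [hψe', hωe']
    have hT1 : Th1 μ β (ω (ω (α.symm a))) (R13R12 K A μ α.toLinearMap β.toLinearMap ψ ω r)
        - Th1 μ β (ω (ω (α.symm a))) (R12R23 K A μ α.toLinearMap β.toLinearMap r)
        + Th1 μ β (ω (ω (α.symm a))) (R23R13 K A μ α.toLinearMap β.toLinearMap ψ ω r)
        = lam • Th1 μ β (ω (ω (α.symm a))) (R13E K A ψ ω e r) := by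
      have h := congrArg (Th1 μ β (ω (ω (α.symm a)))) hYBe
      simpa only [map_sub, map_add, map_smul] using h
    have hT3 : Th3 μ α (ψ (ψ (β.symm a))) (R13R12 K A μ α.toLinearMap β.toLinearMap ψ ω r)
        - Th3 μ α (ψ (ψ (β.symm a))) (R12R23 K A μ α.toLinearMap β.toLinearMap r)
        + Th3 μ α (ψ (ψ (β.symm a))) (R23R13 K A μ α.toLinearMap β.toLinearMap ψ ω r)
        = lam • Th3 μ α (ψ (ψ (β.symm a))) (R13E K A ψ ω e r) := by
      have h := congrArg (Th3 μ α (ψ (ψ (β.symm a)))) hYBe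
      simpa only [map_sub, map_add, map_smul] using h
    simp only [LinearMap.comp_apply, LinearEquiv.coe_coe]
    rw [hXa a, hΔC]
    simp only [mapl_sub, mapr_sub, TensorProduct.map_smul_left, TensorProduct.map_smul_right]
    simp only [LinearMap.sub_apply, LinearMap.smul_apply, map_sub, map_smul, smul_sub]
    simp only [stepT1, stepT2, stepT3, stepS1, stepS2, stepS3, stepT1', stepT2', stepT3',
      stepS1', stepS2', stepS3']
    linear_combination (norm := module) M1 - M2 + M3 - lam • M4 - M5 + M6 - M7 + lam • M8
      - M9 - lam • M10 + lam • M11 + lam • M12 + (lam * lam) • M13 + hT1 - hT3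
  exact ⟨⟨hψω, hcψ, hcω, hco4⟩, halg, ⟨hψω, hcψ, hcω, hco4⟩, hαψ, hαω, hβψ, hβω,
    hcα, hcβ, hψm, hωm, hcompat⟩
end
end

section
/- Under the hypotheses of the quasitriangular construction, (A, μ, Δ_r, 1, α, β, ψ, ω) is a quasitriangular unitary λ-infBH-bialgebra (i.e. r solves the λ-abhYBe) if and only if (Δ_r⊗ψ)(r) = −r₂₃r₁₃, and equivalently if and only if (ω⊗Δ_r)(r) = r₁₃r₁₂ − λ(r₁₃ + r₁₂). -/
open TensorProduct

noncomputable section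

variable (K : Type*) [Field K] (A : Type*) [AddCommGroup A] [Module K A]
variable (M : Type*) [AddCommGroup M] [Module K M]

section QtAux
variable {K : Type*} [Field K] {A : Type*} [AddCommGroup A] [Module K A]

lemma qt_aux1 (μ : A ⊗[K] A →ₗ[K] A) (α β : A ≃ₗ[K] A) (ψ ω : A →ₗ[K] A)
    (hαψ : ∀ a, α (ψ a) = ψ (α a)) (s t : A ⊗[K] A) :
    (TensorProduct.assoc K A A A).toLinearMap
      (TensorProduct.map
        (TensorProduct.map μ β.toLinearMap ∘ₗ (TensorProduct.assoc K A A A).symm.toLinearMap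
          ∘ₗ ((TensorProduct.mk K A (A ⊗[K] A)).flip s) ∘ₗ ω ∘ₗ α.symm.toLinearMap) ψ
        (TensorProduct.map α.toLinearMap α.toLinearMap t))
    = ((TensorProduct.map (μ ∘ₗ TensorProduct.map ω LinearMap.id)
          ((TensorProduct.comm K A A).toLinearMap ∘ₗ TensorProduct.map (α.toLinearMap ∘ₗ ψ) β.toLinearMap))
        ∘ₗ (TensorProduct.tensorTensorTensorComm K A A A A).toLinearMap) (t ⊗ₜ[K] s) := by
  induction t using TensorProduct.induction_on with
  | zero => simp
  | add x y hx hy => simp only [map_add, add_tmul] at *; rw [hx, hy]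
  | tmul a b =>
    induction s using TensorProduct.induction_on with
    | zero => simp
    | add x y hx hy =>
      simp only [map_add, tmul_add, add_tmul, LinearMap.map_add, LinearMap.add_comp,
        LinearMap.comp_add, TensorProduct.map_add_left, LinearMap.add_apply] at *
      rw [hx, hy]
    | tmul c d =>
      simp [TensorProduct.tensorTensorTensorComm_tmul, hαψ]

lemma qt_aux2 (μ : A ⊗[K] A →ₗ[K] A) (α β : A ≃ₗ[K] A) (ψ : A →ₗ[K] A)
    (hβψ : ∀ a, β (ψ a) = ψ (β a)) (s t : A ⊗[K] A) :
    (TensorProduct.assoc K A A A).toLinearMap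
      (TensorProduct.map
        (TensorProduct.map α.toLinearMap μ ∘ₗ (TensorProduct.assoc K A A A).toLinearMap
          ∘ₗ (TensorProduct.mk K (A ⊗[K] A) A s) ∘ₗ ψ ∘ₗ β.symm.toLinearMap) ψ t)
    = ((TensorProduct.map α.toLinearMap
          (TensorProduct.map μ β.toLinearMap ∘ₗ (TensorProduct.assoc K A A A).symm.toLinearMap)
        ∘ₗ (TensorProduct.assoc K A A (A ⊗[K] A)).toLinearMap)
        (s ⊗ₜ[K] (TensorProduct.map (ψ ∘ₗ β.symm.toLinearMap) (ψ ∘ₗ β.symm.toLinearMap) t))) := by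
  induction t using TensorProduct.induction_on with
  | zero => simp
  | add x y hx hy => simp only [map_add, tmul_add] at *; rw [hx, hy]
  | tmul a b =>
    induction s using TensorProduct.induction_on with
    | zero => simp
    | add x y hx hy =>
      simp only [map_add, tmul_add, add_tmul, LinearMap.map_add, LinearMap.add_comp,
        LinearMap.comp_add, TensorProduct.map_add_left, TensorProduct.map_add_right,
        LinearMap.add_apply] at *
      rw [hx, hy]
    | tmul c d =>
      simp [hβψ]

lemma qt_aux3 (ψ ω : A →ₗ[K] A) (e : A) (t : A ⊗[K] A) :
    (TensorProduct.assoc K A A A).toLinearMap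
      (TensorProduct.map ((TensorProduct.mk K A A).flip e ∘ₗ ω) ψ t)
    = TensorProduct.map ω ((TensorProduct.mk K A A e) ∘ₗ ψ) t := by
  induction t using TensorProduct.induction_on with
  | zero => simp
  | add x y hx hy => simp only [map_add] at *; rw [hx, hy]
  | tmul a b => simp

lemma qt_aux4 (μ : A ⊗[K] A →ₗ[K] A) (α β : A ≃ₗ[K] A) (ω : A →ₗ[K] A)
    (hωα : ∀ a, ω (α.symm a) = α.symm (ω a)) (s t : A ⊗[K] A) :
    TensorProduct.map ω
      (TensorProduct.map μ β.toLinearMap ∘ₗ (TensorProduct.assoc K A A A).symm.toLinearMap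
        ∘ₗ ((TensorProduct.mk K A (A ⊗[K] A)).flip s) ∘ₗ ω ∘ₗ α.symm.toLinearMap) t
    = ((TensorProduct.map α.toLinearMap
          (TensorProduct.map μ β.toLinearMap ∘ₗ (TensorProduct.assoc K A A A).symm.toLinearMap)
        ∘ₗ (TensorProduct.assoc K A A (A ⊗[K] A)).toLinearMap)
        ((TensorProduct.map (α.symm.toLinearMap ∘ₗ ω) (α.symm.toLinearMap ∘ₗ ω) t) ⊗ₜ[K] s)) := by
  induction t using TensorProduct.induction_on with
  | zero => simp
  | add x y hx hy => simp only [map_add, add_tmul] at *; rw [hx, hy]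
  | tmul a b =>
    induction s using TensorProduct.induction_on with
    | zero => simp
    | add x y hx hy =>
      simp only [map_add, tmul_add, add_tmul, LinearMap.map_add, LinearMap.add_comp,
        LinearMap.comp_add, TensorProduct.map_add_left, TensorProduct.map_add_right,
        LinearMap.add_apply] at *
      rw [hx, hy]
    | tmul c d =>
      simp [hωα]

lemma qt_aux5 (μ : A ⊗[K] A →ₗ[K] A) (α β : A ≃ₗ[K] A) (ψ ω : A →ₗ[K] A)
    (hβω : ∀ a, β (ω a) = ω (β a)) (s t : A ⊗[K] A) :
    TensorProduct.map ω
      (TensorProduct.map α.toLinearMap μ ∘ₗ (TensorProduct.assoc K A A A).toLinearMap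
        ∘ₗ (TensorProduct.mk K (A ⊗[K] A) A s) ∘ₗ ψ ∘ₗ β.symm.toLinearMap) t
    = (((TensorProduct.assoc K A A A).toLinearMap
        ∘ₗ TensorProduct.map (TensorProduct.map (β.toLinearMap ∘ₗ ω) α.toLinearMap)
          (μ ∘ₗ TensorProduct.map LinearMap.id ψ ∘ₗ (TensorProduct.comm K A A).toLinearMap)
        ∘ₗ (TensorProduct.tensorTensorTensorComm K A A A A).toLinearMap)
        ((TensorProduct.map β.symm.toLinearMap β.symm.toLinearMap t) ⊗ₜ[K] s)) := by
  induction t using TensorProduct.induction_on with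
  | zero => simp
  | add x y hx hy => simp only [map_add, add_tmul] at *; rw [hx, hy]
  | tmul a b =>
    induction s using TensorProduct.induction_on with
    | zero => simp
    | add x y hx hy =>
      simp only [map_add, tmul_add, add_tmul, LinearMap.map_add, LinearMap.add_comp,
        LinearMap.comp_add, TensorProduct.map_add_left, TensorProduct.map_add_right,
        LinearMap.add_apply] at *
      rw [hx, hy]
    | tmul c d =>
      simp [TensorProduct.tensorTensorTensorComm_tmul, hβω]

lemma qt_aux6 (ω : A →ₗ[K] A) (e : A) (t : A ⊗[K] A) :
    TensorProduct.map ω ((TensorProduct.mk K A A).flip e ∘ₗ ω) t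
    = TensorProduct.map LinearMap.id ((TensorProduct.mk K A A).flip e)
        (TensorProduct.map ω ω t) := by
  induction t using TensorProduct.induction_on with
  | zero => simp
  | add x y hx hy => simp only [map_add] at *; rw [hx, hy]
  | tmul a b => simp

lemma qt_expand1 (f g h : A →ₗ[K] A ⊗[K] A) (c : K) (ψ : A →ₗ[K] A) (t : A ⊗[K] A) :
    TensorProduct.map (f - g - c • h) ψ t
    = TensorProduct.map f ψ t - TensorProduct.map g ψ t - c • TensorProduct.map h ψ t := by
  induction t using TensorProduct.induction_on with
  | zero => simp
  | add x y hx hy =>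
    simp only [map_add, smul_add] at *; rw [hx, hy]; abel
  | tmul a b =>
    simp only [TensorProduct.map_tmul, LinearMap.sub_apply, LinearMap.smul_apply,
      TensorProduct.sub_tmul, TensorProduct.smul_tmul']

lemma qt_expand2 (f g h : A →ₗ[K] A ⊗[K] A) (c : K) (ω : A →ₗ[K] A) (t : A ⊗[K] A) :
    TensorProduct.map ω (f - g - c • h) t
    = TensorProduct.map ω f t - TensorProduct.map ω g t - c • TensorProduct.map ω h t := by
  induction t using TensorProduct.induction_on with
  | zero => simp
  | add x y hx hy =>
    simp only [map_add, smul_add] at *; rw [hx, hy]; abel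
  | tmul a b =>
    simp only [TensorProduct.map_tmul, LinearMap.sub_apply, LinearMap.smul_apply,
      TensorProduct.tmul_sub, TensorProduct.tmul_smul]

lemma qt_rearr1 {M : Type*} [AddCommGroup M] (X Y Z W : M) :
    (X - Y + Z = W) ↔ (X - Y - W = -Z) := by
  constructor
  · intro h; rw [← h]; abel
  · intro h; rw [← neg_neg Z, ← h]; abel

lemma qt_rearr2 {M : Type*} [AddCommGroup M] {K : Type*} [Field K] [Module K M]
    (c : K) (X Y Z W V : M) :
    (X - Y + Z = c • W) ↔ (Y - Z - c • V = X - c • (W + V)) := by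
  rw [smul_add]
  constructor
  · intro h; rw [← h]; abel
  · intro h
    rw [← sub_eq_zero]
    have e : X - Y + Z - c • W = (X - (c • W + c • V)) - (Y - Z - c • V) := by abel
    rw [e, ← h, sub_self]

end QtAux

/-- equivalent characterizations of quasitriangular unitary
`λ`-infBH-bialgebras. -/
theorem quasitriangular_characterization
    (K : Type*) [Field K] (A : Type*) [AddCommGroup A] [Module K A]
    (lam : K) (μ : A ⊗[K] A →ₗ[K] A) (α β : A ≃ₗ[K] A) (ψ ω : A →ₗ[K] A)
    (e : A) (r : A ⊗[K] A)
    (halg : BiHomAssoc K A μ α.toLinearMap β.toLinearMap)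
    (hunit : IsUnitBH K A μ α.toLinearMap β.toLinearMap ψ ω e)
    (hαψ : α.toLinearMap ∘ₗ ψ = ψ ∘ₗ α.toLinearMap)
    (hαω : α.toLinearMap ∘ₗ ω = ω ∘ₗ α.toLinearMap)
    (hβψ : β.toLinearMap ∘ₗ ψ = ψ ∘ₗ β.toLinearMap)
    (hβω : β.toLinearMap ∘ₗ ω = ω ∘ₗ β.toLinearMap)
    (hψω : ψ ∘ₗ ω = ω ∘ₗ ψ)
    (hψm : ψ ∘ₗ μ = μ ∘ₗ TensorProduct.map ψ ψ)
    (hωm : ω ∘ₗ μ = μ ∘ₗ TensorProduct.map ω ω)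
    (hrα : TensorProduct.map α.toLinearMap α.toLinearMap r = r)
    (hrβ : TensorProduct.map β.toLinearMap β.toLinearMap r = r)
    (hrψ : TensorProduct.map ψ ψ r = r)
    (hrω : TensorProduct.map ω ω r = r) :
    -- (r solves the λ-abhYBe) ↔ Eq. (14.8), and ↔ Eq. (14.9)
    ((R13R12 K A μ α.toLinearMap β.toLinearMap ψ ω r
        - R12R23 K A μ α.toLinearMap β.toLinearMap r
        + R23R13 K A μ α.toLinearMap β.toLinearMap ψ ω r
      = lam • R13E K A ψ ω e r) ↔
      (TensorProduct.assoc K A A A).toLinearMap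
          (TensorProduct.map (DeltaR K A lam μ α β ψ ω e r) ψ r)
        = - R23R13 K A μ α.toLinearMap β.toLinearMap ψ ω r) ∧
    ((R13R12 K A μ α.toLinearMap β.toLinearMap ψ ω r
        - R12R23 K A μ α.toLinearMap β.toLinearMap r
        + R23R13 K A μ α.toLinearMap β.toLinearMap ψ ω r
      = lam • R13E K A ψ ω e r) ↔
      TensorProduct.map ω (DeltaR K A lam μ α β ψ ω e r) r
        = R13R12 K A μ α.toLinearMap β.toLinearMap ψ ω r
          - lam • (R13E K A ψ ω e r + R12E K A e r)) := by
  classical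
  have hαψ' : ∀ a, α (ψ a) = ψ (α a) := fun a => by
    simpa using LinearMap.congr_fun hαψ a
  have hβψ' : ∀ a, β (ψ a) = ψ (β a) := fun a => by
    simpa using LinearMap.congr_fun hβψ a
  have hαω' : ∀ a, α (ω a) = ω (α a) := fun a => by
    simpa using LinearMap.congr_fun hαω a
  have hβω' : ∀ a, β (ω a) = ω (β a) := fun a => by
    simpa using LinearMap.congr_fun hβω a
  have hωα' : ∀ a, ω (α.symm a) = α.symm (ω a) := fun a => by
    apply α.injective
    rw [hαω', LinearEquiv.apply_symm_apply, LinearEquiv.apply_symm_apply]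
  have hcα : α.symm.toLinearMap ∘ₗ α.toLinearMap = LinearMap.id := by ext x; simp
  have hcβ : β.symm.toLinearMap ∘ₗ β.toLinearMap = LinearMap.id := by ext x; simp
  have hrαs : TensorProduct.map α.symm.toLinearMap α.symm.toLinearMap r = r := by
    conv_lhs => rw [← hrα]
    rw [← LinearMap.comp_apply, ← TensorProduct.map_comp, hcα, TensorProduct.map_id,
      LinearMap.id_apply]
  have hrβs : TensorProduct.map β.symm.toLinearMap β.symm.toLinearMap r = r := by
    conv_lhs => rw [← hrβ]
    rw [← LinearMap.comp_apply, ← TensorProduct.map_comp, hcβ, TensorProduct.map_id,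
      LinearMap.id_apply]
  have hrA4 : TensorProduct.map (α.symm.toLinearMap ∘ₗ ω) (α.symm.toLinearMap ∘ₗ ω) r = r := by
    rw [TensorProduct.map_comp, LinearMap.comp_apply, hrω, hrαs]
  have hrA2 : TensorProduct.map (ψ ∘ₗ β.symm.toLinearMap) (ψ ∘ₗ β.symm.toLinearMap) r = r := by
    rw [TensorProduct.map_comp, LinearMap.comp_apply, hrβs, hrψ]
  have k1 := qt_aux1 μ α β ψ ω hαψ' r r
  rw [hrα] at k1
  have k2 := qt_aux2 μ α β ψ hβψ' r r
  rw [hrA2] at k2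
  have k3 := qt_aux3 ψ ω e r
  have k4 := qt_aux4 μ α β ω hωα' r r
  rw [hrA4] at k4
  have k5 := qt_aux5 μ α β ψ ω hβω' r r
  rw [hrβs] at k5
  have k6 := qt_aux6 ω e r
  rw [hrω] at k6
  have key1 : (TensorProduct.assoc K A A A).toLinearMap
      (TensorProduct.map (DeltaR K A lam μ α β ψ ω e r) ψ r)
      = R13R12 K A μ α.toLinearMap β.toLinearMap ψ ω r
        - R12R23 K A μ α.toLinearMap β.toLinearMap r
        - lam • R13E K A ψ ω e r := by
    simp only [DeltaR, R13R12, R12R23, R13E]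
    rw [qt_expand1, map_sub, map_sub, LinearMap.map_smul, k1, k2, k3]
  have key2 : TensorProduct.map ω (DeltaR K A lam μ α β ψ ω e r) r
      = R12R23 K A μ α.toLinearMap β.toLinearMap r
        - R23R13 K A μ α.toLinearMap β.toLinearMap ψ ω r
        - lam • R12E K A e r := by
    simp only [DeltaR, R12R23, R23R13, R12E]
    rw [qt_expand2, k4, k5, k6]
  constructor
  · rw [key1]
    exact qt_rearr1 _ _ _ _
  · rw [key2]
    exact qt_rearr2 lam _ _ _ _ _
end
end
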